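/- arXiv:2209.00319 — 3 statements merged into one kernel-verified Lean document; each statement's English description precedes it below -/
import Mathlib

section
/- Let Γ be a countable group and μ an irreducible probability measure on Γ. Then the set Γ₀ = ⋃_{k≥1} S_μ^{-k} S_μ^{k} (where S_μ^{-k} = (S_μ^k)^{-1}) is a normal subgroup of Γ. -/
open Filter Topology
open scoped Pointwise Classical

/-- The `n`-th convolution power of a (probability) function `μ` on a group. -/
noncomputable def convPow {G : Type*} [Group G] (μ : G → ℝ) : ℕ → G → ℝ
  | 0 => fun x => if x = 1 then 1 else 0
  | n + 1 => fun x => ∑' y : G, μ y * convPow μ n (y⁻¹ * x)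

/-- The support `S_μ = {x : μ(x) > 0}`. -/
def msupp {G : Type*} [Group G] (μ : G → ℝ) : Set G := {g : G | 0 < μ g}

/-- `Γ₀ = ⋃_{k ≥ 1} S_μ^{-k} S_μ^{k}`. -/
def Gamma0 {G : Type*} [Group G] (μ : G → ℝ) : Set G :=
  ⋃ k ≥ 1, (msupp μ ^ k)⁻¹ * msupp μ ^ k

/-- `μ` is a probability measure on the countable group `G`. -/
def IsProbMeas {G : Type*} [Group G] (μ : G → ℝ) : Prop :=
  (∀ x, 0 ≤ μ x) ∧ ∑' x : G, μ x = 1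

/-- Irreducibility: the semigroup generated by the support is the whole group,
`⋃_{n ≥ 1} S_μ^n = Γ`. -/
def IsIrreducibleMeas {G : Type*} [Group G] (μ : G → ℝ) : Prop :=
  ∀ x : G, ∃ n : ℕ, 0 < n ∧ x ∈ msupp μ ^ n

/-- `d` is the period of `μ`, i.e. `d = gcd {n ∈ ℕ : μ⁽ⁿ⁾(e) > 0}`, characterized by:
`d` divides every element of the set, and every common divisor of the set divides `d`. -/
def IsPeriodOf {G : Type*} [Group G] (μ : G → ℝ) (d : ℕ) : Prop :=
  (∀ n : ℕ, 0 < n → 0 < convPow μ n 1 → d ∣ n) ∧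
  (∀ c : ℕ, (∀ n : ℕ, 0 < n → 0 < convPow μ n 1 → c ∣ n) → c ∣ d)

/-- `Γ₀ = ⋃_{k ≥ 1} S_μ^{-k} S_μ^{k}` is a normal subgroup of `Γ`. -/
theorem stmt0 {G : Type*} [Group G] [Countable G] (μ : G → ℝ)
    (hprob : IsProbMeas μ) (hirr : IsIrreducibleMeas μ) :
    ∃ N : Subgroup G, N.Normal ∧ (N : Set G) = Gamma0 μ := by
  obtain ⟨hpos, hsum⟩ := hprob
  -- the support is nonempty
  have hS : (msupp μ).Nonempty := by
    by_contra h
    rw [Set.not_nonempty_iff_eq_empty] at h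
    have hz : ∀ x, μ x = 0 := fun x =>
      le_antisymm (not_lt.mp fun hx => Set.eq_empty_iff_forall_notMem.mp h x hx) (hpos x)
    simp [hz] at hsum
  obtain ⟨s, hs⟩ := hS
  -- introduction rule for membership in `Gamma0`
  have hintro : ∀ (k : ℕ) (a b : G), 1 ≤ k → a ∈ msupp μ ^ k → b ∈ msupp μ ^ k →
      a⁻¹ * b ∈ Gamma0 μ := by
    intro k a b hk ha hb
    exact Set.mem_biUnion hk (Set.mul_mem_mul (Set.inv_mem_inv.mpr ha) hb)
  -- elimination rule for membership in `Gamma0`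
  have helim : ∀ x ∈ Gamma0 μ,
      ∃ k, 1 ≤ k ∧ ∃ a ∈ msupp μ ^ k, ∃ b ∈ msupp μ ^ k, x = a⁻¹ * b := by
    intro x hx
    obtain ⟨k, hk, hxk⟩ := Set.mem_iUnion₂.mp hx
    obtain ⟨a, ha, b, hb, rfl⟩ := hxk
    exact ⟨k, hk, a⁻¹, Set.mem_inv.mp ha, b, hb, by group⟩
  refine ⟨{ carrier := Gamma0 μ
            one_mem' := ?_
            mul_mem' := ?_
            inv_mem' := ?_ }, ⟨?_⟩, rfl⟩
  · -- closed under multiplication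
    intro x y hx hy
    obtain ⟨n, hn, a, ha, b, hb, rfl⟩ := helim x hx
    obtain ⟨m, hm, c, hc, d, hd, rfl⟩ := helim y hy
    obtain ⟨r, hr, hcr⟩ := hirr c⁻¹
    -- `b * c⁻¹ * d ∈ S ^ (n + r + m)`
    have hB : b * c⁻¹ * d ∈ msupp μ ^ (n + r + m) := by
      rw [pow_add, pow_add]
      exact Set.mul_mem_mul (Set.mul_mem_mul hb hcr) hd
    -- `1 ∈ S ^ (m + r)`, hence `a ∈ S ^ (n + r + m)`
    have h1 : (1 : G) ∈ msupp μ ^ (m + r) := by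
      have := Set.mul_mem_mul hc hcr
      rwa [mul_inv_cancel, ← pow_add] at this
    have hA : a ∈ msupp μ ^ (n + r + m) := by
      have := Set.mul_mem_mul h1 ha
      rw [one_mul, ← pow_add] at this
      have heq : m + r + n = n + r + m := by omega
      rwa [heq] at this
    have := hintro (n + r + m) a (b * c⁻¹ * d) (by omega) hA hB
    have heq : a⁻¹ * (b * c⁻¹ * d) = a⁻¹ * b * (c⁻¹ * d) := by group
    rwa [heq] at this
  · -- 1 ∈ Γ₀
    have h1 := hintro 1 s s le_rfl (by simpa using hs) (by simpa using hs)
    rwa [inv_mul_cancel] at h1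
  · -- closed under inverse
    intro x hx
    obtain ⟨k, hk, a, ha, b, hb, rfl⟩ := helim x hx
    have := hintro k b a hk hb ha
    have heq : b⁻¹ * a = (a⁻¹ * b)⁻¹ := by group
    rwa [heq] at this
  · -- normality
    intro x hx g
    obtain ⟨k, hk, a, ha, b, hb, rfl⟩ := helim x hx
    obtain ⟨q, hq, hgq⟩ := hirr g⁻¹
    have hA : a * g⁻¹ ∈ msupp μ ^ (k + q) := by
      rw [pow_add]; exact Set.mul_mem_mul ha hgq
    have hB : b * g⁻¹ ∈ msupp μ ^ (k + q) := by
      rw [pow_add]; exact Set.mul_mem_mul hb hgq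
    have := hintro (k + q) (a * g⁻¹) (b * g⁻¹) (by omega) hA hB
    have heq : (a * g⁻¹)⁻¹ * (b * g⁻¹) = g * (a⁻¹ * b) * g⁻¹ := by group
    rwa [heq] at this
end

section
/- Let Γ be a countable group and μ an irreducible probability measure on Γ with period d = gcd{n ∈ ℕ : μ^{(n)}(e) > 0}. Then the normal subgroup Γ₀ = ⋃_{k≥1} S_μ^{-k} S_μ^{k} has index d in Γ, and the quotient group Γ/Γ₀ is cyclic of order d; more precisely, for any x₀ ∈ S_μ the cosets x₀^k Γ₀, k = 0, …, d−1, are pairwise distinct and exhaust Γ, and x₀^d Γ₀ = Γ₀. -/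
/-!
Write `S = S_μ`. Since `μ⁽ⁿ⁾(x) > 0` exactly when `x ∈ Sⁿ`, the period `d` is the gcd of the
return times `{n : e ∈ Sⁿ}`. If `x ∈ Sᵃ ∩ Sᵇ` and `x⁻¹ ∈ Sᵖ` (irreducibility), then
`e ∈ Sᵃ⁺ᵖ ∩ Sᵇ⁺ᵖ`, so `a ≡ b (mod d)`. Hence `x ↦ n mod d`, for any `n` with `x ∈ Sⁿ`, is a
well-defined homomorphism `Γ → ℤ/d`; it is surjective because every `x₀ ∈ S` maps to `1`, and the
cosets `x₀ᵏΓ₀` are its fibres. Its kernel is `Γ₀`: an element of `S⁻ᵏSᵏ` clearly maps to `0`, and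
conversely, if `x ∈ Sⁿ` with `d ∣ n`, then since the return times contain all large multiples of
`d`, `e ∈ Sᵐ` for a large multiple `m` of `d`, so `x = e⁻¹x ∈ S⁻⁽ᵐ⁺ⁿ⁾Sᵐ⁺ⁿ`.
-/

open Filter Topology
open scoped Pointwise Classical

lemma tsum_pos_iff_exists_pos {ι : Type*} {f : ι → ℝ} (hf : Summable f) (h0 : ∀ i, 0 ≤ f i) :
    0 < ∑' i, f i ↔ ∃ i, 0 < f i := by
  refine ⟨fun hpos => ?_, fun ⟨i, hi⟩ => hf.tsum_pos h0 i hi⟩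
  have hne : f ≠ 0 := fun h => hpos.ne' (by simp [h])
  obtain ⟨i, hi⟩ := Function.ne_iff.1 hne
  exact ⟨i, (h0 i).lt_of_ne' hi⟩

section ConvolutionPowers

variable {G : Type*} [Group G] {μ : G → ℝ}

lemma convPow_nonneg (h0 : ∀ x, 0 ≤ μ x) : ∀ n x, 0 ≤ convPow μ n x
  | 0, x => by unfold convPow; split_ifs <;> norm_num
  | n + 1, x => tsum_nonneg fun y => mul_nonneg (h0 y) (convPow_nonneg h0 n _)

lemma summable_mul_convPow (h0 : ∀ x, 0 ≤ μ x) (hμ : Summable μ) {n : ℕ} {C : ℝ}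
    (hC : ∀ x, convPow μ n x ≤ C) (x : G) :
    Summable fun y => μ y * convPow μ n (y⁻¹ * x) :=
  (hμ.mul_right C).of_nonneg_of_le (fun y => mul_nonneg (h0 y) (convPow_nonneg h0 n _))
    (fun y => mul_le_mul_of_nonneg_left (hC _) (h0 y))

lemma convPow_le_tsum_pow (h0 : ∀ x, 0 ≤ μ x) (hμ : Summable μ) :
    ∀ n x, convPow μ n x ≤ (∑' y, μ y) ^ n
  | 0, x => by unfold convPow; split_ifs <;> norm_num
  | n + 1, x => calc
      ∑' y, μ y * convPow μ n (y⁻¹ * x) ≤ ∑' y, μ y * (∑' y, μ y) ^ n :=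
        (summable_mul_convPow h0 hμ (convPow_le_tsum_pow h0 hμ n) x).tsum_le_tsum
          (fun y => mul_le_mul_of_nonneg_left (convPow_le_tsum_pow h0 hμ n _) (h0 y))
          (hμ.mul_right _)
    _ = (∑' y, μ y) ^ (n + 1) := by rw [tsum_mul_right, pow_succ']

theorem convPow_pos_iff (h0 : ∀ x, 0 ≤ μ x) (hμ : Summable μ) :
    ∀ n x, 0 < convPow μ n x ↔ x ∈ msupp μ ^ n
  | 0, x => by unfold convPow; split_ifs <;> simp_all
  | n + 1, x => by
    change 0 < ∑' y, μ y * convPow μ n (y⁻¹ * x) ↔ _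
    rw [tsum_pos_iff_exists_pos (summable_mul_convPow h0 hμ (convPow_le_tsum_pow h0 hμ n) x)
      fun y => mul_nonneg (h0 y) (convPow_nonneg h0 n _), pow_succ', Set.mem_mul]
    constructor
    · rintro ⟨y, hy⟩
      have hμy : 0 < μ y := pos_of_mul_pos_left hy (convPow_nonneg h0 n _)
      have hn : 0 < convPow μ n (y⁻¹ * x) := pos_of_mul_pos_right hy (h0 y)
      exact ⟨y, hμy, y⁻¹ * x, (convPow_pos_iff h0 hμ n _).1 hn, mul_inv_cancel_left y x⟩
    · rintro ⟨y, hy, z, hz, rfl⟩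
      refine ⟨y, mul_pos hy ?_⟩
      rw [inv_mul_cancel_left]
      exact (convPow_pos_iff h0 hμ n z).2 hz

end ConvolutionPowers

section WordLength

variable {G : Type*} [Group G] {S : Set G}

def returnTimes (S : Set G) : AddSubmonoid ℕ where
  carrier := {n | (1 : G) ∈ S ^ n}
  add_mem' {a b} (ha : (1 : G) ∈ S ^ a) (hb : (1 : G) ∈ S ^ b) := by
    simpa [pow_add] using Set.mul_mem_mul ha hb
  zero_mem' := by simp

lemma mem_returnTimes {n : ℕ} : n ∈ returnTimes S ↔ (1 : G) ∈ S ^ n := Iff.rfl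

noncomputable def period (S : Set G) : ℕ := Nat.setGcd (returnTimes S)

lemma period_dvd {n : ℕ} (h : (1 : G) ∈ S ^ n) : period S ∣ n :=
  Nat.setGcd_dvd_of_mem h

lemma period_pos {n : ℕ} (hn : 0 < n) (h1 : (1 : G) ∈ S ^ n) : 0 < period S :=
  Nat.pos_of_ne_zero fun h => hn.ne' (Nat.setGcd_eq_zero_iff.1 h (mem_returnTimes.2 h1))

lemma exists_one_mem_pow_of_ge :
    ∃ N, ∀ m ≥ N, period S ∣ m → (1 : G) ∈ S ^ m := by
  obtain ⟨N, hN⟩ := Nat.exists_mem_closure_of_ge (returnTimes S : Set ℕ)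
  exact ⟨N, fun m hm hdvd => mem_returnTimes.1 (by simpa using hN m hm hdvd)⟩

lemma natCast_eq_of_mem_pow {x : G} {a b p : ℕ} (hp : x⁻¹ ∈ S ^ p) (ha : x ∈ S ^ a)
    (hb : x ∈ S ^ b) : (a : ZMod (period S)) = b := by
  have return_time {c : ℕ} (hc : x ∈ S ^ c) : ((c + p : ℕ) : ZMod (period S)) = 0 := by
    rw [ZMod.natCast_eq_zero_iff]
    apply period_dvd
    simpa [pow_add] using Set.mul_mem_mul hc hp
  have h := (return_time ha).trans (return_time hb).symm
  push_cast at h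
  exact add_right_cancel h

lemma exists_monoidHom_zmod_period (hgen : ∀ x : G, ∃ n, x ∈ S ^ n) :
    ∃ φ : G →* Multiplicative (ZMod (period S)),
      ∀ (n : ℕ) x, x ∈ S ^ n → φ x = Multiplicative.ofAdd (n : ZMod (period S)) := by
  choose len hlen using hgen
  have hφ (n : ℕ) (x : G) (hx : x ∈ S ^ n) : (len x : ZMod (period S)) = n :=
    natCast_eq_of_mem_pow (hlen x⁻¹) (hlen x) hx
  refine ⟨{ toFun := fun x => Multiplicative.ofAdd (len x : ZMod (period S))
            map_one' := ?_
            map_mul' := fun x y => ?_ }, fun n x hx => congrArg Multiplicative.ofAdd (hφ n x hx)⟩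
  · simpa using hφ 0 1 (by simp)
  · have hxy : x * y ∈ S ^ (len x + len y) := pow_add S _ _ ▸ Set.mul_mem_mul (hlen x) (hlen y)
    simpa [← ofAdd_add] using hφ _ _ hxy

lemma ker_eq_iUnion_inv_pow_mul_pow (hgen : ∀ x : G, ∃ n, 0 < n ∧ x ∈ S ^ n)
    (φ : G →* Multiplicative (ZMod (period S)))
    (hφ : ∀ (n : ℕ) x, x ∈ S ^ n → φ x = Multiplicative.ofAdd (n : ZMod (period S))) :
    (φ.ker : Set G) = ⋃ k ≥ 1, (S ^ k)⁻¹ * S ^ k := by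
  ext x
  simp only [SetLike.mem_coe, MonoidHom.mem_ker, Set.mem_iUnion, exists_prop]
  constructor
  · intro hx
    obtain ⟨n, hn, hxn⟩ := hgen x
    obtain ⟨N, hN⟩ := exists_one_mem_pow_of_ge (S := S)
    have hdvd : period S ∣ n := by
      rw [← ZMod.natCast_eq_zero_iff, ← ofAdd_eq_one, ← hφ n x hxn, hx]
    have h1N : (1 : G) ∈ S ^ (n * N) := hN _ (Nat.le_mul_of_pos_left N hn) (hdvd.mul_right N)
    have h1k : (1 : G) ∈ S ^ (n * N + n) := hN _ (by nlinarith) (dvd_add (hdvd.mul_right N) hdvd)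
    have hxk : x ∈ S ^ (n * N + n) := by simpa [pow_add] using Set.mul_mem_mul h1N hxn
    exact ⟨n * N + n, by omega, 1, by simpa using h1k, x, hxk, one_mul x⟩
  · rintro ⟨k, -, x, hx, y, hy, rfl⟩
    rw [Set.mem_inv] at hx
    rw [map_mul, ← inv_inv x, map_inv, hφ k _ hx, hφ k y hy, inv_mul_cancel]

end WordLength

section CyclicQuotient

variable {G : Type*} [Group G] {d : ℕ} {φ : G →* Multiplicative (ZMod d)} {x₀ : G}

lemma map_pow_eq_ofAdd (hx₀ : φ x₀ = Multiplicative.ofAdd 1) (k : ℕ) :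
    φ (x₀ ^ k) = Multiplicative.ofAdd (k : ZMod d) := by
  rw [map_pow, hx₀, ← ofAdd_nsmul, nsmul_one]

lemma surjective_of_map_eq_ofAdd_one [NeZero d] (hx₀ : φ x₀ = Multiplicative.ofAdd 1) :
    Function.Surjective φ := fun z =>
  ⟨x₀ ^ (Multiplicative.toAdd z).val, by
    rw [map_pow_eq_ofAdd hx₀, ZMod.natCast_zmod_val]; rfl⟩

lemma pow_smul_ker_injOn (hx₀ : φ x₀ = Multiplicative.ofAdd 1) {j k : ℕ} (hj : j < d)
    (hk : k < d) (h : x₀ ^ j • (φ.ker : Set G) = x₀ ^ k • (φ.ker : Set G)) : j = k := by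
  rw [leftCoset_eq_iff, MonoidHom.mem_ker, map_mul, map_inv, map_pow_eq_ofAdd hx₀,
    map_pow_eq_ofAdd hx₀, inv_mul_eq_one, Equiv.apply_eq_iff_eq, ZMod.natCast_eq_natCast_iff'] at h
  rwa [Nat.mod_eq_of_lt hj, Nat.mod_eq_of_lt hk] at h

lemma iUnion_pow_smul_ker [NeZero d] (hx₀ : φ x₀ = Multiplicative.ofAdd 1) :
    ⋃ k < d, x₀ ^ k • (φ.ker : Set G) = Set.univ := by
  refine Set.eq_univ_of_forall fun x => Set.mem_biUnion (ZMod.val_lt (φ x).toAdd) ?_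
  rw [mem_leftCoset_iff, SetLike.mem_coe, MonoidHom.mem_ker, map_mul, map_inv,
    map_pow_eq_ofAdd hx₀, ZMod.natCast_zmod_val, inv_mul_eq_one]
  rfl

lemma pow_period_smul_ker (hx₀ : φ x₀ = Multiplicative.ofAdd 1) :
    x₀ ^ d • (φ.ker : Set G) = φ.ker := by
  apply leftCoset_mem_leftCoset
  rw [MonoidHom.mem_ker, map_pow_eq_ofAdd hx₀, ZMod.natCast_self, ofAdd_zero]

end CyclicQuotient

lemma IsPeriodOf.eq_period {G : Type*} [Group G] {μ : G → ℝ} {d : ℕ} (hd : IsPeriodOf μ d)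
    (h0 : ∀ x, 0 ≤ μ x) (hμ : Summable μ) : d = period (msupp μ) := by
  have hret {n : ℕ} (hpos : 0 < n) : 0 < convPow μ n 1 ↔ n ∈ returnTimes (msupp μ) :=
    convPow_pos_iff h0 hμ n 1
  refine Nat.dvd_antisymm (Nat.dvd_setGcd_iff.2 fun n hn => ?_)
    (hd.2 _ fun n hpos h => period_dvd ((hret hpos).1 h))
  rcases Nat.eq_zero_or_pos n with rfl | hpos
  · exact dvd_zero d
  · exact hd.1 n hpos ((hret hpos).2 hn)

lemma singleton_mul_eq_smul {G : Type*} [Group G] (a : G) (s : Set G) :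
    ({a} : Set G) * s = a • s := by
  rw [Set.singleton_mul, ← Set.image_smul]; rfl

theorem stmt1_general {G : Type*} [Group G] (μ : G → ℝ) (d : ℕ)
    (hprob : IsProbMeas μ) (hirr : IsIrreducibleMeas μ) (hd : IsPeriodOf μ d) :
    ∃ N : Subgroup G, ∃ hN : N.Normal, (N : Set G) = Gamma0 μ ∧ N.index = d ∧
      (letI := hN
       IsCyclic (G ⧸ N) ∧ Nat.card (G ⧸ N) = d) ∧
      ∀ x₀ ∈ msupp μ,
        (∀ j < d, ∀ k < d,
            ({x₀ ^ j} : Set G) * Gamma0 μ = ({x₀ ^ k} : Set G) * Gamma0 μ → j = k) ∧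
        (⋃ k < d, ({x₀ ^ k} : Set G) * Gamma0 μ) = Set.univ ∧
        ({x₀ ^ d} : Set G) * Gamma0 μ = Gamma0 μ := by
  obtain ⟨h0, hsum⟩ := hprob
  have hμ : Summable μ := by
    by_contra h
    simp [tsum_eq_zero_of_not_summable h] at hsum
  obtain rfl := hd.eq_period h0 hμ
  obtain ⟨n, hn, h1⟩ := hirr 1
  have : NeZero (period (msupp μ)) := ⟨(period_pos hn h1).ne'⟩
  obtain ⟨φ, hφ⟩ := exists_monoidHom_zmod_period fun x => (hirr x).imp fun _ => And.right
  have hφ_one (x₀ : G) (hx₀ : x₀ ∈ msupp μ) : φ x₀ = Multiplicative.ofAdd 1 := by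
    simpa using hφ 1 x₀ (by simpa using hx₀)
  obtain ⟨x₁, hx₁⟩ : (msupp μ).Nonempty :=
    Set.nonempty_iff_ne_empty.2 fun h => by simp [h, Set.empty_pow hn.ne'] at h1
  let e := QuotientGroup.quotientKerEquivOfSurjective φ
    (surjective_of_map_eq_ofAdd_one (hφ_one x₁ hx₁))
  have hcard : Nat.card (G ⧸ φ.ker) = period (msupp μ) := by
    rw [Nat.card_congr e.toEquiv, Nat.card_eq_fintype_card, Fintype.card_multiplicative,
      ZMod.card]
  have hker : (φ.ker : Set G) = Gamma0 μ := ker_eq_iUnion_inv_pow_mul_pow hirr φ hφ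
  refine ⟨φ.ker, inferInstance, hker, hcard, ⟨isCyclic_of_surjective e.symm e.symm.surjective,
    hcard⟩, fun x₀ hx₀ => ?_⟩
  simp only [← hker, singleton_mul_eq_smul]
  exact ⟨fun j hj k hk => pow_smul_ker_injOn (hφ_one x₀ hx₀) hj hk,
    iUnion_pow_smul_ker (hφ_one x₀ hx₀), pow_period_smul_ker (hφ_one x₀ hx₀)⟩

/-- `Γ₀` is a normal subgroup of index `d`, the quotient `Γ/Γ₀` is cyclic of
order `d`, and for any `x₀ ∈ S_μ` the cosets `x₀^k Γ₀`, `k = 0, …, d-1`, are pairwise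
distinct and exhaust `Γ`, with `x₀^d Γ₀ = Γ₀`. -/
theorem stmt1 {G : Type*} [Group G] [Countable G] (μ : G → ℝ) (d : ℕ)
    (hprob : IsProbMeas μ) (hirr : IsIrreducibleMeas μ) (hd : IsPeriodOf μ d) :
    ∃ N : Subgroup G, ∃ hN : N.Normal, (N : Set G) = Gamma0 μ ∧ N.index = d ∧
      (letI := hN
       IsCyclic (G ⧸ N) ∧ Nat.card (G ⧸ N) = d) ∧
      ∀ x₀ ∈ msupp μ,
        (∀ j < d, ∀ k < d,
            ({x₀ ^ j} : Set G) * Gamma0 μ = ({x₀ ^ k} : Set G) * Gamma0 μ → j = k) ∧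
        (⋃ k < d, ({x₀ ^ k} : Set G) * Gamma0 μ) = Set.univ ∧
        ({x₀ ^ d} : Set G) * Gamma0 μ = Gamma0 μ :=
  stmt1_general μ d hprob hirr hd
end

section
/- Let Γ be a countable group with |Γ| > 1 and μ an irreducible probability measure on Γ with spectral radius ρ(μ). Then there exists k₀ ∈ ℕ such that μ^{(n)}(e) < ρ(μ)^n strictly for all n ≥ k₀. -/
open Filter Topology
open scoped Pointwise Classical ENNReal

noncomputable def convPowE {G : Type*} [Group G] (ν : G → ℝ≥0∞) : ℕ → G → ℝ≥0∞
  | 0 => fun x => if x = 1 then 1 else 0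
  | n + 1 => fun x => ∑' y : G, ν y * convPowE ν n (y⁻¹ * x)

section aux

variable {G : Type*} [Group G] (ν : G → ℝ≥0∞)

lemma convPowE_zero (x : G) : convPowE ν 0 x = if x = 1 then 1 else 0 := rfl

lemma convPowE_succ (n : ℕ) (x : G) :
    convPowE ν (n + 1) x = ∑' y : G, ν y * convPowE ν n (y⁻¹ * x) := rfl

lemma convPow_zero {μ : G → ℝ} (x : G) : convPow μ 0 x = if x = 1 then 1 else 0 := rfl

lemma convPow_succ {μ : G → ℝ} (n : ℕ) (x : G) :
    convPow μ (n + 1) x = ∑' y : G, μ y * convPow μ n (y⁻¹ * x) := rfl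

lemma convPowE_tsum (hν : ∑' x : G, ν x = 1) : ∀ n, ∑' x : G, convPowE ν n x = 1
  | 0 => by simp only [convPowE_zero]; exact tsum_ite_eq (1 : G) 1
  | n + 1 => by
    simp only [convPowE_succ]
    calc ∑' (x : G) (y : G), ν y * convPowE ν n (y⁻¹ * x)
        = ∑' (y : G) (x : G), ν y * convPowE ν n (y⁻¹ * x) := ENNReal.tsum_comm
      _ = ∑' y : G, ν y * ∑' x : G, convPowE ν n (y⁻¹ * x) :=
          tsum_congr fun y => ENNReal.tsum_mul_left
      _ = ∑' y : G, ν y * 1 := by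
          refine tsum_congr fun y => ?_
          have h := (Equiv.mulLeft y⁻¹).tsum_eq (convPowE ν n)
          simp only [Equiv.coe_mulLeft] at h
          rw [h, convPowE_tsum hν n]
      _ = 1 := by simpa using hν

lemma convPowE_le_one (hν : ∑' x : G, ν x = 1) (n : ℕ) (x : G) : convPowE ν n x ≤ 1 :=
  (ENNReal.le_tsum x).trans (convPowE_tsum ν hν n).le

lemma convPowE_ne_top (hν : ∑' x : G, ν x = 1) (n : ℕ) (x : G) : convPowE ν n x ≠ ⊤ :=
  ((convPowE_le_one ν hν n x).trans_lt ENNReal.one_lt_top).ne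

lemma convPowE_add (m n : ℕ) (x : G) :
    convPowE ν (m + n) x = ∑' y : G, convPowE ν m y * convPowE ν n (y⁻¹ * x) := by
  induction m generalizing x with
  | zero =>
    simp only [Nat.zero_add, convPowE_zero]
    symm
    rw [tsum_eq_single (1 : G)]
    · simp
    · intro b hb; simp [hb]
  | succ m ih =>
    have h1 : m + 1 + n = (m + n) + 1 := by omega
    rw [h1, convPowE_succ]
    calc ∑' y : G, ν y * convPowE ν (m + n) (y⁻¹ * x)
        = ∑' (y : G) (z : G), ν y * (convPowE ν m z * convPowE ν n (z⁻¹ * (y⁻¹ * x))) := by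
          refine tsum_congr fun y => ?_
          rw [ih]; exact ENNReal.tsum_mul_left.symm
      _ = ∑' (y : G) (w : G), ν y * (convPowE ν m (y⁻¹ * w) * convPowE ν n (w⁻¹ * x)) := by
          refine tsum_congr fun y => ?_
          rw [← (Equiv.mulLeft y⁻¹).tsum_eq
            (fun z => ν y * (convPowE ν m z * convPowE ν n (z⁻¹ * (y⁻¹ * x))))]
          refine tsum_congr fun w => ?_
          have h2 : (y⁻¹ * w)⁻¹ * (y⁻¹ * x) = w⁻¹ * x := by group
          simp only [Equiv.coe_mulLeft, h2]
      _ = ∑' (w : G) (y : G), ν y * (convPowE ν m (y⁻¹ * w) * convPowE ν n (w⁻¹ * x)) :=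
          ENNReal.tsum_comm
      _ = ∑' w : G, convPowE ν (m + 1) w * convPowE ν n (w⁻¹ * x) := by
          refine tsum_congr fun w => ?_
          calc ∑' y : G, ν y * (convPowE ν m (y⁻¹ * w) * convPowE ν n (w⁻¹ * x))
              = ∑' y : G, (ν y * convPowE ν m (y⁻¹ * w)) * convPowE ν n (w⁻¹ * x) :=
                tsum_congr fun y => (mul_assoc _ _ _).symm
            _ = (∑' y : G, ν y * convPowE ν m (y⁻¹ * w)) * convPowE ν n (w⁻¹ * x) :=
                ENNReal.tsum_mul_right
            _ = convPowE ν (m + 1) w * convPowE ν n (w⁻¹ * x) := by rw [convPowE_succ]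

variable {μ : G → ℝ}

lemma convPow_eq_toReal (h0 : ∀ x, 0 ≤ μ x)
    (hν : ∑' x : G, ENNReal.ofReal (μ x) = 1) :
    ∀ n (x : G), convPow μ n x = (convPowE (fun g => ENNReal.ofReal (μ g)) n x).toReal
  | 0, x => by
    rw [convPow_zero, convPowE_zero]; split_ifs <;> simp
  | n + 1, x => by
    rw [convPow_succ, convPowE_succ,
      ENNReal.tsum_toReal_eq (fun y => ENNReal.mul_ne_top ENNReal.ofReal_ne_top
        (convPowE_ne_top _ hν n _))]
    refine tsum_congr fun y => ?_
    rw [ENNReal.toReal_mul, ENNReal.toReal_ofReal (h0 y), convPow_eq_toReal h0 hν n]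

end aux

lemma convPow_pos_of_mem {G : Type*} [Group G] {μ : G → ℝ} (h0 : ∀ x, 0 ≤ μ x) (hsμ : Summable μ)
    (hnn : ∀ n (x : G), 0 ≤ convPow μ n x) (hle1 : ∀ n (x : G), convPow μ n x ≤ 1) :
    ∀ n, ∀ g ∈ msupp μ ^ n, 0 < convPow μ n g := by
  intro n
  induction n with
  | zero =>
    intro g hg
    rw [pow_zero, Set.mem_one] at hg
    simp [convPow_zero, hg]
  | succ n ih =>
    intro g hg
    rw [pow_succ'] at hg
    obtain ⟨s, hs, h, hh, rfl⟩ := Set.mem_mul.1 hg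
    rw [convPow_succ]
    have hsum : Summable fun y : G => μ y * convPow μ n (y⁻¹ * (s * h)) :=
      Summable.of_nonneg_of_le (fun y => mul_nonneg (h0 y) (hnn n _))
        (fun y => mul_le_of_le_one_right (h0 y) (hle1 n _)) hsμ
    have hterm : 0 < μ s * convPow μ n (s⁻¹ * (s * h)) := by
      have : s⁻¹ * (s * h) = h := by group
      rw [this]
      exact mul_pos hs (ih h hh)
    exact hterm.trans_le
      (Summable.le_tsum hsum s fun j _ => mul_nonneg (h0 j) (hnn n _))

theorem stmt9' {G : Type*} [Group G] [Countable G] [Nontrivial G] (μ : G → ℝ) (ρ : ℝ)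
    (hprob : (∀ x, 0 ≤ μ x) ∧ ∑' x : G, μ x = 1)
    (hirr : ∀ x : G, ∃ n : ℕ, 0 < n ∧ x ∈ msupp μ ^ n)
    (hρ : Filter.Tendsto (fun n : ℕ => (convPow μ n 1) ^ ((n : ℝ)⁻¹)) Filter.atTop (𝓝 ρ)) :
    ∃ k₀ : ℕ, ∀ n ≥ k₀, convPow μ n 1 < ρ ^ n := by
  obtain ⟨h0, h1⟩ := hprob
  have hsμ : Summable μ := by
    by_contra h
    rw [tsum_eq_zero_of_not_summable h] at h1
    norm_num at h1
  set ν : G → ℝ≥0∞ := fun g => ENNReal.ofReal (μ g) with hνdef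
  have hν : ∑' x : G, ν x = 1 := by
    rw [hνdef, ← ENNReal.ofReal_tsum_of_nonneg h0 hsμ, h1, ENNReal.ofReal_one]
  have hP : ∀ n (x : G), convPow μ n x = (convPowE ν n x).toReal := convPow_eq_toReal h0 hν
  have hnn : ∀ n (x : G), 0 ≤ convPow μ n x := fun n x => by
    rw [hP]; exact ENNReal.toReal_nonneg
  have hle1 : ∀ n (x : G), convPow μ n x ≤ 1 := fun n x => by
    rw [hP]
    calc (convPowE ν n x).toReal ≤ (1 : ℝ≥0∞).toReal :=
          ENNReal.toReal_mono (by simp) (convPowE_le_one ν hν n x)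
      _ = 1 := by simp
  have hnetop : ∀ n (x : G), convPowE ν n x ≠ ⊤ := convPowE_ne_top ν hν
  have hsplit : ∀ m n (x : G), convPow μ (m + n) x
      = ∑' y : G, convPow μ m y * convPow μ n (y⁻¹ * x) := by
    intro m n x
    rw [hP, convPowE_add,
      ENNReal.tsum_toReal_eq (fun y => ENNReal.mul_ne_top (hnetop m y) (hnetop n _))]
    exact tsum_congr fun y => by rw [ENNReal.toReal_mul, hP, hP]
  have hsummable : ∀ m n (x : G),
      Summable fun y : G => convPow μ m y * convPow μ n (y⁻¹ * x) := by
    intro m n x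
    have hne : ∑' y : G, convPowE ν m y * convPowE ν n (y⁻¹ * x) ≠ ⊤ := by
      rw [← convPowE_add]; exact hnetop _ _
    exact (ENNReal.summable_toReal hne).congr fun y => by
      rw [ENNReal.toReal_mul, ← hP, ← hP]
  have hsuper : ∀ m n : ℕ, convPow μ m 1 * convPow μ n 1 ≤ convPow μ (m + n) 1 := by
    intro m n
    rw [hsplit m n 1]
    have := Summable.le_tsum (hsummable m n 1) 1 (fun j _ => mul_nonneg (hnn m j) (hnn n _))
    simpa using this
  have hpow : ∀ n k : ℕ, (convPow μ n 1) ^ k ≤ convPow μ (k * n) 1 := by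
    intro n k
    induction k with
    | zero => simp [convPow_zero]
    | succ k ih =>
      have hkn : (k + 1) * n = k * n + n := by ring
      rw [hkn, pow_succ]
      exact le_trans (mul_le_mul_of_nonneg_right ih (hnn n 1)) (hsuper (k * n) n)
  have hρ_ge : ∀ n : ℕ, 1 ≤ n → convPow μ n 1 ^ ((n : ℝ)⁻¹) ≤ ρ := by
    intro n hn
    have hmono : Tendsto (fun k : ℕ => k * n) atTop atTop :=
      Filter.tendsto_atTop_mono (fun k => Nat.le_mul_of_pos_right k hn) tendsto_id
    have htend : Tendsto (fun k : ℕ => convPow μ (k * n) 1 ^ (((k * n : ℕ) : ℝ))⁻¹)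
        atTop (𝓝 ρ) := hρ.comp hmono
    refine ge_of_tendsto htend ?_
    filter_upwards [eventually_ge_atTop 1] with k hk
    have hk0 : (k : ℝ) ≠ 0 := Nat.cast_ne_zero.2 (by omega)
    have hn0 : (n : ℝ) ≠ 0 := Nat.cast_ne_zero.2 (by omega)
    have hkn : ((k : ℝ)) * (((k * n : ℕ) : ℝ))⁻¹ = (n : ℝ)⁻¹ := by
      push_cast
      field_simp
    calc convPow μ n 1 ^ ((n : ℝ)⁻¹)
        = ((convPow μ n 1) ^ k : ℝ) ^ (((k * n : ℕ) : ℝ))⁻¹ := by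
          rw [← Real.rpow_natCast (convPow μ n 1) k, ← Real.rpow_mul (hnn n 1), hkn]
      _ ≤ convPow μ (k * n) 1 ^ (((k * n : ℕ) : ℝ))⁻¹ :=
          Real.rpow_le_rpow (pow_nonneg (hnn n 1) k) (hpow n k) (by positivity)
  have hρpos : 0 < ρ := by
    obtain ⟨N, hN0, hN1⟩ := hirr 1
    have hpos := convPow_pos_of_mem h0 hsμ hnn hle1 N 1 hN1
    exact lt_of_lt_of_le (Real.rpow_pos_of_pos hpos _) (hρ_ge N hN0)
  have hub : ∀ n : ℕ, 1 ≤ n → convPow μ n 1 ≤ ρ ^ n := by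
    intro n hn
    have h := hρ_ge n hn
    have hn0 : (n : ℝ) ≠ 0 := Nat.cast_ne_zero.2 (by omega)
    have key : (convPow μ n 1 ^ ((n : ℝ)⁻¹)) ^ n = convPow μ n 1 := by
      rw [← Real.rpow_natCast (convPow μ n 1 ^ ((n : ℝ)⁻¹)) n, ← Real.rpow_mul (hnn n 1),
        inv_mul_cancel₀ hn0, Real.rpow_one]
    calc convPow μ n 1 = (convPow μ n 1 ^ ((n : ℝ)⁻¹)) ^ n := key.symm
      _ ≤ ρ ^ n := pow_le_pow_left₀ (Real.rpow_nonneg (hnn n 1) _) h n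
  obtain ⟨n₁, hn₁⟩ : ∃ n₁ : ℕ, ∀ n ≥ n₁, 1 ≤ n ∧ ρ / 2 < convPow μ n 1 ^ ((n : ℝ)⁻¹) := by
    have h2 : ∀ᶠ n : ℕ in atTop, ρ / 2 < convPow μ n 1 ^ ((n : ℝ)⁻¹) :=
      hρ.eventually (eventually_gt_nhds (half_lt_self hρpos))
    exact eventually_atTop.1 ((eventually_ge_atTop 1).and h2)
  have hpos1 : ∀ n, n₁ ≤ n → 0 < convPow μ n 1 := by
    intro n hn
    obtain ⟨hn1, hgt⟩ := hn₁ n hn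
    by_contra h
    have h' : convPow μ n 1 = 0 := le_antisymm (not_lt.1 h) (hnn n 1)
    rw [h', Real.zero_rpow (inv_ne_zero (Nat.cast_ne_zero.2 (by omega)))] at hgt
    linarith [half_pos hρpos]
  obtain ⟨x, hxS, hx1⟩ : ∃ x : G, x ∈ msupp μ ∧ x ≠ 1 := by
    by_contra hcon
    push_neg at hcon
    obtain ⟨z, hz⟩ := exists_ne (1 : G)
    obtain ⟨m, hm0, hmz⟩ := hirr z
    have hall : ∀ k, ∀ g ∈ msupp μ ^ k, g = (1 : G) := by
      intro k
      induction k with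
      | zero => intro g hg; rwa [pow_zero, Set.mem_one] at hg
      | succ k ih =>
        intro g hg
        rw [pow_succ] at hg
        obtain ⟨a, ha, c, hc, rfl⟩ := Set.mem_mul.1 hg
        rw [ih a ha, hcon c hc, one_mul]
    exact hz (hall m z hmz)
  obtain ⟨b, hb0, hbmem⟩ := hirr x⁻¹
  have hbpos : 0 < convPow μ b x⁻¹ := convPow_pos_of_mem h0 hsμ hnn hle1 b x⁻¹ hbmem
  have hcomb : ∀ m k (g : G), 0 < convPow μ m 1 → 0 < convPow μ k g →
      0 < convPow μ (m + k) g := by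
    intro m k g hm hk
    rw [hsplit m k g]
    have hterm : 0 < convPow μ m 1 * convPow μ k (1⁻¹ * g) := by
      simpa using mul_pos hm hk
    exact hterm.trans_le
      (Summable.le_tsum (hsummable m k g) 1 fun j _ => mul_nonneg (hnn m j) (hnn k _))
  have hμx : 0 < convPow μ 1 x :=
    convPow_pos_of_mem h0 hsμ hnn hle1 1 x (by rwa [pow_one])
  refine ⟨n₁ + b + 1, fun n hn => ?_⟩
  have h1n : 1 ≤ n := by omega
  refine lt_of_le_of_ne (hub n h1n) ?_
  intro heq
  have hxpos : 0 < convPow μ n x := by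
    have hn' : n = (n - 1) + 1 := by omega
    rw [hn']
    exact hcomb (n - 1) 1 x (hpos1 _ (by omega)) hμx
  have hxinvpos : 0 < convPow μ n x⁻¹ := by
    have hn' : n = (n - b) + b := by omega
    rw [hn']
    exact hcomb (n - b) b x⁻¹ (hpos1 _ (by omega)) hbpos
  have hfin : convPow μ n 1 * convPow μ n 1 + convPow μ n x * convPow μ n x⁻¹
      ≤ convPow μ (n + n) 1 := by
    rw [hsplit n n 1]
    have hs := Summable.sum_le_tsum ({1, x} : Finset G)
      (fun j _ => mul_nonneg (hnn n j) (hnn n _)) (hsummable n n 1)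
    rw [Finset.sum_pair (Ne.symm hx1)] at hs
    simpa using hs
  have hupper : convPow μ (n + n) 1 ≤ ρ ^ (n + n) := hub (n + n) (by omega)
  have hrw : ρ ^ (n + n) = convPow μ n 1 * convPow μ n 1 := by rw [pow_add, ← heq]
  linarith [mul_pos hxpos hxinvpos]

/-- if `|Γ| > 1`, there is `k₀` such that `μ⁽ⁿ⁾(e) < ρ(μ)ⁿ` strictly for all
`n ≥ k₀`. -/
theorem stmt9 {G : Type*} [Group G] [Countable G] [Nontrivial G] (μ : G → ℝ) (ρ : ℝ)
    (hprob : IsProbMeas μ) (hirr : IsIrreducibleMeas μ)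
    (hρ : Filter.Tendsto (fun n : ℕ => (convPow μ n 1) ^ ((n : ℝ)⁻¹)) Filter.atTop (𝓝 ρ)) :
    ∃ k₀ : ℕ, ∀ n ≥ k₀, convPow μ n 1 < ρ ^ n := by
  exact stmt9' μ ρ hprob hirr hρ
end
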